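/- arXiv:1303.1671 — 4 statements merged into one kernel-verified Lean document; each statement's English description precedes it below -/
import Mathlib

section
/- If a finite simple graph G on n vertices has an odd cycle transversal S of size k, then the graph G² has a vertex cover of size n + k. (Forward direction of Lemma 1.) -/
/-- The graph `G²` on vertex set `V × Bool` (copy 1 = `false`, copy 2 = `true`):
edges `{(u,i),(v,i)}` for every edge `{u,v}` of `G`, plus `{(v,1),(v,2)}` for every `v`. -/
def doubledGraph {V : Type*} (G : SimpleGraph V) : SimpleGraph (V × Bool) where
  Adj x y := (x.2 = y.2 ∧ G.Adj x.1 y.1) ∨ (x.1 = y.1 ∧ x.2 ≠ y.2)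
  symm := ⟨by
    rintro ⟨u, i⟩ ⟨v, j⟩ (⟨h1, h2⟩ | ⟨h1, h2⟩)
    · exact Or.inl ⟨h1.symm, h2.symm⟩
    · exact Or.inr ⟨h1.symm, h2.symm⟩⟩
  loopless := ⟨by
    rintro ⟨u, i⟩ (⟨_, h⟩ | ⟨_, h⟩)
    · exact G.loopless.irrefl u h
    · exact h rfl⟩

/-- `X` is a vertex cover of `G`: it contains an endpoint of every edge. -/
def IsVertexCover {α : Type*} (G : SimpleGraph α) (X : Set α) : Prop :=
  ∀ ⦃u v : α⦄, G.Adj u v → u ∈ X ∨ v ∈ X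

/-! Extend a 2-colouring `f` of `G - S` arbitrarily to `S` and cover `G²` by the copy `(v, f v)` of
every vertex together with the other copy `(v, !f v)` of every vertex of `S`. A vertical edge
`(v, false)(v, true)` meets `(v, f v)`; an edge `(u, i)(v, i)` with `u, v ∉ S` has `f u ≠ f v`, so
`i` is one of them. -/

namespace SimpleGraph

variable {V : Type*} {G : SimpleGraph V}

theorem exists_bool_ne_of_colorable_induce {s : Set V} (h : (G.induce s).Colorable 2) :
    ∃ f : V → Bool, ∀ ⦃u v⦄, u ∈ s → v ∈ s → G.Adj u v → f u ≠ f v := by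
  classical
  obtain ⟨c⟩ := h
  refine ⟨fun v => if hv : v ∈ s then finTwoEquiv (c ⟨v, hv⟩) else false, ?_⟩
  intro u v hu hv huv
  simp only [dif_pos hu, dif_pos hv, ne_eq, EmbeddingLike.apply_eq_iff_eq]
  exact c.valid (show (G.induce s).Adj ⟨u, hu⟩ ⟨v, hv⟩ from huv)

end SimpleGraph

section doubledCover

variable {V : Type*} {G : SimpleGraph V} {S : Set V} {f : V → Bool}

variable (S f) in
def doubledCover : Set (V × Bool) :=
  Set.range (fun v => (v, f v)) ∪ (fun v => (v, !f v)) '' S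

theorem mem_doubledCover {p : V × Bool} : p ∈ doubledCover S f ↔ p.1 ∈ S ∨ p.2 = f p.1 := by
  obtain ⟨v, i⟩ := p
  cases Bool.eq_or_eq_not i (f v) <;> aesop (add simp doubledCover)

theorem ncard_doubledCover [Finite V] : (doubledCover S f).ncard = Nat.card V + S.ncard := by
  have hdisj : Disjoint (Set.range fun v => (v, f v)) ((fun v => (v, !f v)) '' S) := by
    rw [Set.disjoint_left]
    rintro _ ⟨v, rfl⟩ ⟨w, -, hw⟩
    obtain ⟨rfl, h⟩ := Prod.mk.inj hw
    exact Bool.not_ne_self _ h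
  have hinj (g : V → Bool) : Function.Injective fun v => (v, g v) :=
    fun _ _ h => congrArg Prod.fst h
  rw [doubledCover, Set.ncard_union_eq hdisj (Set.toFinite _) (Set.toFinite _),
    Set.ncard_range_of_injective (hinj f), Set.ncard_image_of_injective S (hinj _)]

theorem isVertexCover_doubledCover
    (hf : ∀ ⦃u v⦄, u ∈ Sᶜ → v ∈ Sᶜ → G.Adj u v → f u ≠ f v) :
    IsVertexCover (doubledGraph G) (doubledCover S f) := by
  rintro ⟨u, i⟩ ⟨v, j⟩ (⟨rfl, huv⟩ | ⟨rfl, hij⟩) <;> simp only [mem_doubledCover]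
  · by_cases hu : u ∈ S
    · exact .inl (.inl hu)
    by_cases hv : v ∈ S
    · exact .inr (.inl hv)
    have := hf hu hv huv
    cases i <;> cases hfu : f u <;> cases hfv : f v <;> simp_all
  · cases i <;> cases j <;> cases f u <;> simp_all

end doubledCover

/-- Forward direction of Lemma 1: if a finite simple graph `G` on `n` vertices has an odd
cycle transversal `S` of size `k` (i.e. `G` induced on `Sᶜ` is bipartite), then `G²` has a
vertex cover of size `n + k`. -/
theorem stmt0 {V : Type*} [Fintype V] (G : SimpleGraph V) (S : Set V) (k : ℕ)
    (hOCT : (G.induce (Sᶜ : Set V)).Colorable 2) (hcard : S.ncard = k) :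
    ∃ X : Set (V × Bool), IsVertexCover (doubledGraph G) X ∧
      X.ncard = Fintype.card V + k := by
  obtain ⟨f, hf⟩ := G.exists_bool_ne_of_colorable_induce hOCT
  refine ⟨doubledCover S f, isVertexCover_doubledCover hf, ?_⟩
  rw [ncard_doubledCover, Nat.card_eq_fintype_card, hcard]
end

section
/- Let H be a finite simple graph on h vertices and T an odd cycle transversal of H. If H² has a vertex cover X of size h + r such that for each v ∈ T, exactly one of (v,1), (v,2) belongs to X, then T' = {v ∈ V(H) : (v,1) ∈ X and (v,2) ∈ X} is an odd cycle transversal of H of size r that is disjoint from T. (Backward direction of Observation 1.) -/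
/-
Every rung `{(v,1),(v,2)}` of `H²` is an edge, so a vertex cover `X` meets each fibre of
`V(H) × {1,2}` in one or two points; counting fibres gives `|X| = h + |T'|`. Off `T'`, colour
`v` by a copy `(v,b)` missing from `X`: an edge `uv` of `H` with equal colours would leave the
edge `{(u,b),(v,b)}` of `H²` uncovered, so this is a proper 2-colouring of `H - T'`.
-/

namespace doubledGraph

variable {V : Type*} {G : SimpleGraph V}

theorem adj_false_true (v : V) : (doubledGraph G).Adj (v, false) (v, true) :=
  Or.inr ⟨rfl, Bool.false_ne_true⟩

theorem adj_of_adj (b : Bool) {u v : V} (h : G.Adj u v) : (doubledGraph G).Adj (u, b) (v, b) :=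
  Or.inl ⟨rfl, h⟩

end doubledGraph

theorem Set.ncard_prod_bool {V : Type*} [Finite V] (X : Set (V × Bool)) :
    X.ncard = {v | (v, false) ∈ X}.ncard + {v | (v, true) ∈ X}.ncard := by
  have hsplit : X = (·, false) '' {v | (v, false) ∈ X} ∪ (·, true) '' {v | (v, true) ∈ X} := by
    ext ⟨v, b⟩
    cases b <;> simp
  have hdisj : Disjoint ((·, false) '' {v | (v, false) ∈ X}) ((·, true) '' {v | (v, true) ∈ X}) :=
    Set.disjoint_left.mpr <| by rintro _ ⟨u, -, rfl⟩ ⟨w, -, h⟩; simp at h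
  conv_lhs => rw [hsplit]
  rw [Set.ncard_union_eq hdisj, Set.ncard_image_of_injective _ (Prod.mk_left_injective _),
    Set.ncard_image_of_injective _ (Prod.mk_left_injective _)]

namespace IsVertexCover

variable {V : Type*} {G : SimpleGraph V} {X : Set (V × Bool)}

theorem mem_false_or_mem_true (hX : IsVertexCover (doubledGraph G) X) (v : V) :
    (v, false) ∈ X ∨ (v, true) ∈ X :=
  hX (doubledGraph.adj_false_true v)

theorem ncard_eq_card_add_ncard_both [Finite V] (hX : IsVertexCover (doubledGraph G) X) :
    X.ncard = Nat.card V + {v | (v, false) ∈ X ∧ (v, true) ∈ X}.ncard := by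
  have hunion : {v | (v, false) ∈ X} ∪ {v | (v, true) ∈ X} = Set.univ :=
    Set.eq_univ_of_forall hX.mem_false_or_mem_true
  rw [Set.ncard_prod_bool, ← Set.ncard_union_add_ncard_inter, hunion, Set.ncard_univ]
  rfl

theorem colorable_induce_compl_both (hX : IsVertexCover (doubledGraph G) X) :
    (G.induce {v | (v, false) ∈ X ∧ (v, true) ∈ X}ᶜ).Colorable 2 := by
  classical
  let color (v : V) : Bool := decide ((v, false) ∈ X)
  have hmissing : ∀ v ∉ {v | (v, false) ∈ X ∧ (v, true) ∈ X}, (v, color v) ∉ X := by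
    intro v hv
    by_cases h : (v, false) ∈ X
    · simpa [color, h] using hv
    · simp [color, h]
  let C : (G.induce {v | (v, false) ∈ X ∧ (v, true) ∈ X}ᶜ).Coloring Bool :=
    SimpleGraph.Coloring.mk (fun v => color v) fun {u v} hadj hcolor => by
      rcases hX (doubledGraph.adj_of_adj (color u) hadj) with hu | hv'
      · exact hmissing u u.2 hu
      · exact hmissing v v.2 (hcolor ▸ hv')
  simpa using C.colorable

end IsVertexCover

theorem stmt9_general {V : Type*} [Fintype V] (H : SimpleGraph V) (T : Set V)
    (X : Set (V × Bool)) (r : ℕ)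
    (hX : IsVertexCover (doubledGraph H) X)
    (hcard : X.ncard = Fintype.card V + r)
    (hexact : ∀ v ∈ T, ((v, false) ∈ X ∧ (v, true) ∉ X) ∨
                       ((v, false) ∉ X ∧ (v, true) ∈ X)) :
    (H.induce (({v : V | (v, false) ∈ X ∧ (v, true) ∈ X}ᶜ : Set V))).Colorable 2 ∧
    {v : V | (v, false) ∈ X ∧ (v, true) ∈ X}.ncard = r ∧
    Disjoint {v : V | (v, false) ∈ X ∧ (v, true) ∈ X} T := by
  refine ⟨hX.colorable_induce_compl_both, ?_, ?_⟩
  · have := hX.ncard_eq_card_add_ncard_both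
    rw [hcard, Nat.card_eq_fintype_card] at this
    omega
  · refine Set.disjoint_right.mpr fun v hvT hboth => ?_
    rcases hexact v hvT with ⟨-, h⟩ | ⟨h, -⟩
    exacts [h hboth.2, h hboth.1]

/-- Backward direction of Observation 1: if `H²` has a vertex cover `X` of size `h + r` such
that for each `v ∈ T` exactly one of `(v,1)`, `(v,2)` belongs to `X`, then
`T' = {v | (v,1) ∈ X ∧ (v,2) ∈ X}` is an OCT of `H` of size `r` disjoint from `T`. -/
theorem stmt9 {V : Type*} [Fintype V] (H : SimpleGraph V) (T : Set V)
    (X : Set (V × Bool)) (r : ℕ)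
    (hT : (H.induce (Tᶜ : Set V)).Colorable 2)
    (hX : IsVertexCover (doubledGraph H) X)
    (hcard : X.ncard = Fintype.card V + r)
    (hexact : ∀ v ∈ T, ((v, false) ∈ X ∧ (v, true) ∉ X) ∨
                       ((v, false) ∉ X ∧ (v, true) ∈ X)) :
    (H.induce (({v : V | (v, false) ∈ X ∧ (v, true) ∈ X}ᶜ : Set V))).Colorable 2 ∧
    {v : V | (v, false) ∈ X ∧ (v, true) ∈ X}.ncard = r ∧
    Disjoint {v : V | (v, false) ∈ X ∧ (v, true) ∈ X} T :=
  stmt9_general H T X r hX hcard hexact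
end

section
/- Let G be a finite simple graph, A ⊆ V(G), and let Y ⊆ A be a vertex cover of the induced subgraph G[A]. Let W = {u ∈ V(G) \ A : u is adjacent in G to some vertex of A \ Y}, and let Z be a vertex cover of the induced subgraph G[(V(G) \ A) \ W]. Then Y ∪ W ∪ Z is a vertex cover of G. (Correctness of step 2 of the disjoint compression algorithm.) -/
/-- `X` is a vertex cover of the induced subgraph `G[A]`: it contains an endpoint of
every edge of `G` with both endpoints in `A`. -/
def IsVertexCoverOn {α : Type*} (G : SimpleGraph α) (A X : Set α) : Prop :=
  ∀ ⦃u v : α⦄, G.Adj u v → u ∈ A → v ∈ A → u ∈ X ∨ v ∈ X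

namespace IsVertexCoverOn

variable {V : Type*} {G : SimpleGraph V} {A B W X Y : Set V}

theorem mono (h : IsVertexCoverOn G A X) (hXY : X ⊆ Y) : IsVertexCoverOn G A Y :=
  fun _ _ huv hu hv => (h huv hu hv).imp (@hXY _) (@hXY _)

theorem union_of_diff (h : IsVertexCoverOn G (B \ W) X) : IsVertexCoverOn G B (W ∪ X) := by
  intro u v huv hu hv
  by_cases huW : u ∈ W
  · exact Or.inl (Or.inl huW)
  by_cases hvW : v ∈ W
  · exact Or.inr (Or.inl hvW)
  exact (h huv ⟨hu, huW⟩ ⟨hv, hvW⟩).imp Or.inr Or.inr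

theorem isVertexCover_of_compl (hA : IsVertexCoverOn G A X) (hAc : IsVertexCoverOn G Aᶜ X)
    (hcross : ∀ ⦃u v⦄, G.Adj u v → u ∈ A → v ∉ A → u ∈ X ∨ v ∈ X) : IsVertexCover G X := by
  intro u v huv
  by_cases hu : u ∈ A <;> by_cases hv : v ∈ A
  · exact hA huv hu hv
  · exact hcross huv hu hv
  · exact (hcross huv.symm hv hu).symm
  · exact hAc huv hu hv

end IsVertexCoverOn

theorem stmt11_general {V : Type*} (G : SimpleGraph V) (A Y W Z : Set V)
    (hY : IsVertexCoverOn G A Y)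
    (hW : W = {u : V | u ∈ Aᶜ ∧ ∃ w ∈ A \ Y, G.Adj u w})
    (hZ : IsVertexCoverOn G (Aᶜ \ W) Z) :
    IsVertexCover G (Y ∪ W ∪ Z) := by
  refine (hY.mono ?_).isVertexCover_of_compl (hZ.union_of_diff.mono ?_) ?_
  · exact Set.subset_union_left.trans Set.subset_union_left
  · rw [Set.union_assoc]
    exact Set.subset_union_right
  · -- a crossing edge whose end in `A` avoids `Y` puts its other end in `W`
    intro u v huv hu hv
    by_cases huY : u ∈ Y
    · exact Or.inl (Or.inl (Or.inl huY))
    · exact Or.inr (Or.inl (Or.inr (hW ▸ ⟨hv, u, ⟨hu, huY⟩, huv.symm⟩)))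

/-- Correctness of step 2 of the disjoint compression algorithm: if `Y ⊆ A` is a vertex
cover of `G[A]`, `W` is the set of vertices outside `A` adjacent to some vertex of `A \ Y`,
and `Z` is a vertex cover of `G[(V(G) \ A) \ W]`, then `Y ∪ W ∪ Z` is a vertex cover of `G`. -/
theorem stmt11 {V : Type*} (G : SimpleGraph V) (A Y W Z : Set V)
    (hYA : Y ⊆ A) (hY : IsVertexCoverOn G A Y)
    (hW : W = {u : V | u ∈ Aᶜ ∧ ∃ w ∈ A \ Y, G.Adj u w})
    (hZsub : Z ⊆ Aᶜ \ W) (hZ : IsVertexCoverOn G (Aᶜ \ W) Z) :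
    IsVertexCover G (Y ∪ W ∪ Z) :=
  stmt11_general G A Y W Z hY hW hZ
end

section
/- Let G be a finite simple graph and let S be an odd cycle transversal of G with |S| = k + 1. Then G has an odd cycle transversal of size at most k if and only if there exists a subset T ⊆ S such that the induced subgraph G[T] is bipartite and the graph H = G − (S \ T) (the subgraph of G induced on V(G) \ (S \ T)) has an odd cycle transversal T' with T' ∩ T = ∅ and |T'| ≤ |T| − 1. (Correctness of the compression step.) -/
/-!
An OCT `S'` with `|S'| < |S|` corresponds to the pair `T = S \ S'`, the part of `S` it keeps,
and `T' = S' \ S`, the vertices outside `S` it deletes; conversely `(S \ T) ∪ T'` recovers an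
OCT. Deleting `S \ T` and then `T'` deletes exactly `S'`, so bipartiteness transfers both ways,
`G[T]` is bipartite because `T` avoids `S'`, and `|S'| < |S|` is equivalent to
`|S' \ S| < |S \ S'|`, i.e. to `|T'| < |T|`.
-/

open Set

namespace SimpleGraph

variable {V : Type*} (G : SimpleGraph V)

theorem exists_compression_of_ncard_lt {S S' : Set V} (hS : S.Finite) (hS'fin : S'.Finite)
    (hS' : (G.induce S'ᶜ).Colorable 2) (hlt : S'.ncard < S.ncard) :
    ∃ T ⊆ S, (G.induce T).Colorable 2 ∧ ∃ T' ⊆ (S \ T)ᶜ,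
      (G.induce ((S \ T)ᶜ \ T')).Colorable 2 ∧ T' ∩ T = ∅ ∧ T'.ncard + 1 ≤ T.ncard := by
  have hdeleted : (S \ (S \ S'))ᶜ \ (S' \ S) = S'ᶜ := by
    ext v
    simp only [mem_sdiff, mem_compl_iff]
    tauto
  refine ⟨S \ S', sdiff_subset, hS'.of_hom (G.induceHomOfLE fun _ hv => hv.2).toHom,
    S' \ S, fun v hv ⟨hvS, _⟩ => hv.2 hvS, hdeleted ▸ hS', ?_, ?_⟩
  · rw [← disjoint_iff_inter_eq_empty]
    exact disjoint_sdiff_left.mono_right sdiff_subset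
  · exact (ncard_lt_ncard_iff_ncard_sdiff_lt_ncard_sdiff hS'fin hS).1 hlt

theorem exists_ncard_lt_of_compression {S T T' : Set V} (hS : S.Finite) (hTS : T ⊆ S)
    (hT' : (G.induce ((S \ T)ᶜ \ T')).Colorable 2) (hcard : T'.ncard + 1 ≤ T.ncard) :
    ∃ S', (G.induce S'ᶜ).Colorable 2 ∧ S'.ncard < S.ncard := by
  refine ⟨(S \ T) ∪ T', by rwa [compl_union, ← sdiff_eq], ?_⟩
  calc ((S \ T) ∪ T').ncard ≤ (S \ T).ncard + T'.ncard := ncard_union_le _ _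
    _ < (S \ T).ncard + T.ncard := by omega
    _ = S.ncard := ncard_sdiff_add_ncard_of_subset hTS hS

end SimpleGraph

theorem stmt14_general {V : Type*} [Fintype V] (G : SimpleGraph V) (S : Set V) (k : ℕ)
    (hSk : S.ncard = k + 1) :
    (∃ S' : Set V, (G.induce (S'ᶜ : Set V)).Colorable 2 ∧ S'.ncard ≤ k) ↔
    (∃ T : Set V, T ⊆ S ∧ (G.induce (T : Set V)).Colorable 2 ∧
      ∃ T' : Set V, T' ⊆ ((S \ T)ᶜ : Set V) ∧
        (G.induce (((S \ T)ᶜ \ T' : Set V))).Colorable 2 ∧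
        T' ∩ T = ∅ ∧ T'.ncard + 1 ≤ T.ncard) := by
  constructor
  · rintro ⟨S', hS', hS'k⟩
    exact G.exists_compression_of_ncard_lt S.toFinite S'.toFinite hS' (by omega)
  · rintro ⟨T, hTS, -, T', -, hT', -, hcard⟩
    obtain ⟨S', hS', hlt⟩ := G.exists_ncard_lt_of_compression S.toFinite hTS hT' hcard
    exact ⟨S', hS', by omega⟩

/-- Correctness of the compression step: given an OCT `S` of `G` with `|S| = k + 1`, the
graph `G` has an OCT of size at most `k` iff there is `T ⊆ S` with `G[T]` bipartite such
that `H = G − (S \ T)` has an OCT `T'` disjoint from `T` with `|T'| ≤ |T| − 1`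
(stated as `|T'| + 1 ≤ |T|`).  Here an OCT of `H` is a set `T' ⊆ (S \ T)ᶜ` such that
`G` induced on `(S \ T)ᶜ \ T'` is bipartite. -/
theorem stmt14 {V : Type*} [Fintype V] (G : SimpleGraph V) (S : Set V) (k : ℕ)
    (hS : (G.induce (Sᶜ : Set V)).Colorable 2) (hSk : S.ncard = k + 1) :
    (∃ S' : Set V, (G.induce (S'ᶜ : Set V)).Colorable 2 ∧ S'.ncard ≤ k) ↔
    (∃ T : Set V, T ⊆ S ∧ (G.induce (T : Set V)).Colorable 2 ∧
      ∃ T' : Set V, T' ⊆ ((S \ T)ᶜ : Set V) ∧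
        (G.induce (((S \ T)ᶜ \ T' : Set V))).Colorable 2 ∧
        T' ∩ T = ∅ ∧ T'.ncard + 1 ≤ T.ncard) :=
  stmt14_general G S k hSk
end
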